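/- Let A be an invertible GDN matrix and fix indices i ≠ j. If the entry function α ↦ (A^α)_{ij} is given by an exponential polynomial p (agreeing with A^α for α > 0 and with p(0) = 0 since A^0 = I), and p has at most w real roots counted with multiplicity, then the set T̄ = {α > 1 : (A^α)_{ij} < 0} has at most ⌊(w−1)/2⌋ connected components. -/

import Mathlib

/-!
The entry `p α = (A^α)_{ij}` vanishes at `0` and is nonnegative at every integer `α ≥ 1`, being
an entry of the nonnegative matrix `A^k`. If `x₁ < ⋯ < x_m` lie in `T̄` and in distinct
components of it, `p` is somewhere nonnegative between consecutive `x_k`, which forces two roots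
there counted with multiplicity: either two sign changes, or a zero at a local maximum, which is
a critical point. With the roots at `0`, in `[1, x₁)` and in `(x_m, ⌈x_m⌉ + 1]` this gives
`2m + 1 ≤ w`.
-/

open Matrix Finset

/-- The continuous power `A^α := S * D^α * S⁻¹` of a diagonalizable matrix
`A = S * diagonal d * S⁻¹`. -/
noncomputable def contPow {n : ℕ} (S : Matrix (Fin n) (Fin n) ℝ) (d : Fin n → ℝ) (α : ℝ) :
    Matrix (Fin n) (Fin n) ℝ :=
  S * Matrix.diagonal (fun i => d i ^ α) * S⁻¹

lemma contPow_natCast {n : ℕ} {S : Matrix (Fin n) (Fin n) ℝ} (hS : IsUnit S.det)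
    (d : Fin n → ℝ) (k : ℕ) : contPow S d k = (S * diagonal d * S⁻¹) ^ k := by
  obtain ⟨u, rfl⟩ := (isUnit_iff_isUnit_det S).2 hS
  rw [contPow, ← coe_units_inv, Units.conj_pow, diagonal_pow]
  simp only [Real.rpow_natCast, Pi.pow_def]

lemma contPow_natCast_apply_nonneg {n : ℕ} {A S : Matrix (Fin n) (Fin n) ℝ} {d : Fin n → ℝ}
    (hA : ∀ i j, 0 ≤ A i j) (hS : IsUnit S.det) (hdiag : A = S * diagonal d * S⁻¹) (k : ℕ)
    (i j : Fin n) : 0 ≤ contPow S d k i j := by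
  rw [contPow_natCast hS, ← hdiag]
  exact pow_apply_nonneg hA k i j

open Set

noncomputable def rootMultBound (p : ℝ → ℝ) (t : ℝ) : ℕ :=
  if deriv p t = 0 then 2 else 1

lemma one_le_rootMultBound (p : ℝ → ℝ) (t : ℝ) : 1 ≤ rootMultBound p t := by
  unfold rootMultBound
  split_ifs <;> norm_num

section RootCounting

variable {p : ℝ → ℝ}

lemma iteratedDeriv_eq_zero_of_lt_rootMultBound {t : ℝ} (ht : p t = 0) {k : ℕ}
    (hk : k < rootMultBound p t) : iteratedDeriv k p t = 0 := by
  unfold rootMultBound at hk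
  split_ifs at hk with hdt
  · interval_cases k
    · simpa using ht
    · simpa using hdt
  · obtain rfl : k = 0 := by omega
    simpa using ht

lemma exists_mem_Ioo_nonneg_of_not_subset {x y : ℝ} (hx : p x < 0) (hy : p y < 0)
    (h : ¬ Icc x y ⊆ {t | p t < 0}) : ∃ z ∈ Ioo x y, 0 ≤ p z := by
  obtain ⟨z, ⟨hxz, hzy⟩, hz⟩ := not_subset.1 h
  have hz : 0 ≤ p z := not_lt.1 hz
  exact ⟨z, ⟨lt_of_le_of_ne hxz (by rintro rfl; linarith),
    lt_of_le_of_ne hzy (by rintro rfl; linarith)⟩, hz⟩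

lemma exists_roots_of_neg_of_nonneg_of_neg {x y z : ℝ} (hc : ContinuousOn p (Icc x y))
    (hx : p x < 0) (hy : p y < 0) (hz : z ∈ Ioo x y) (hpz : 0 ≤ p z) :
    ∃ F : Finset ℝ, (∀ t ∈ F, t ∈ Ioo x y ∧ p t = 0) ∧ 2 ≤ ∑ t ∈ F, rootMultBound p t := by
  by_cases hpos : ∃ z' ∈ Ioo x y, 0 < p z'
  · obtain ⟨z', ⟨hxz', hz'y⟩, hpz'⟩ := hpos
    obtain ⟨r₁, ⟨hxr₁, hr₁z'⟩, hr₁⟩ := intermediate_value_Ioc hxz'.le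
      (hc.mono (Icc_subset_Icc_right hz'y.le)) ⟨hx, hpz'.le⟩
    obtain ⟨r₂, ⟨hz'r₂, hr₂y⟩, hr₂⟩ := intermediate_value_Ico' hz'y.le
      (hc.mono (Icc_subset_Icc_left hxz'.le)) ⟨hy, hpz'.le⟩
    have hr₁z' : r₁ < z' := lt_of_le_of_ne hr₁z' (by rintro rfl; linarith)
    have hz'r₂ : z' < r₂ := lt_of_le_of_ne hz'r₂ (by rintro rfl; linarith)
    refine ⟨{r₁, r₂}, ?_, ?_⟩
    · simp only [Finset.mem_insert, Finset.mem_singleton, forall_eq_or_imp, forall_eq]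
      exact ⟨⟨⟨hxr₁, by linarith⟩, hr₁⟩, ⟨⟨by linarith, hr₂y⟩, hr₂⟩⟩
    · rw [sum_pair (by linarith)]
      have := one_le_rootMultBound p r₁
      have := one_le_rootMultBound p r₂
      omega
  · push Not at hpos
    have hpz0 : p z = 0 := le_antisymm (hpos z hz) hpz
    have hmax : IsLocalMax p z :=
      Filter.mem_of_superset (Ioo_mem_nhds hz.1 hz.2) fun t ht => by
        simpa [hpz0] using hpos t ht
    refine ⟨{z}, by simpa using ⟨hz, hpz0⟩, ?_⟩
    simp [rootMultBound, hmax.deriv_eq_zero]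

lemma exists_roots_of_neg_separated {lo : ℝ} (hc : ContinuousOn p (Ici lo)) (hlo : 0 ≤ p lo)
    (s : Finset ℝ) (hs : ∀ x ∈ s, lo < x ∧ p x < 0)
    (hsep : ∀ x ∈ s, ∀ y ∈ s, x < y → ∃ z ∈ Ioo x y, 0 ≤ p z) :
    ∃ R : Finset ℝ, (∀ t ∈ R, p t = 0 ∧ lo ≤ t ∧ ∃ x ∈ s, t < x) ∧
      2 * s.card ≤ ∑ t ∈ R, rootMultBound p t + 1 := by
  classical
  induction s using Finset.induction_on_max with
  | empty => exact ⟨∅, by simp, by simp⟩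
  | insert a s has ih =>
    have hlo_a := (hs a (mem_insert_self a s)).1
    have hpa := (hs a (mem_insert_self a s)).2
    obtain ⟨R, hR, hRsum⟩ := ih (fun x hx => hs x (mem_insert_of_mem hx))
      (fun x hx y hy => hsep x (mem_insert_of_mem hx) y (mem_insert_of_mem hy))
    rw [card_insert_of_notMem fun h => (has a h).false]
    rcases s.eq_empty_or_nonempty with rfl | hne
    · obtain ⟨r, ⟨hlor, hra⟩, hr⟩ := intermediate_value_Ico' hlo_a.le
        (hc.mono Icc_subset_Ici_self) ⟨hpa, hlo⟩
      refine ⟨{r}, by simpa using ⟨hr, hlor, hra⟩, ?_⟩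
      simpa using one_le_rootMultBound p r
    · set m := s.max' hne
      have hm : m ∈ s := s.max'_mem hne
      have hma : m < a := has m hm
      have hlo_m := (hs m (mem_insert_of_mem hm)).1
      obtain ⟨z, hz, hpz⟩ := hsep m (mem_insert_of_mem hm) a (mem_insert_self a s) hma
      obtain ⟨F, hF, hFsum⟩ := exists_roots_of_neg_of_nonneg_of_neg
        (hc.mono (Icc_subset_Ici_iff hma.le |>.2 hlo_m.le))
        (hs m (mem_insert_of_mem hm)).2 hpa hz hpz
      have hdisj : Disjoint R F := disjoint_left.2 fun t htR htF => by
        obtain ⟨-, -, x, hx, htx⟩ := hR t htR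
        linarith [s.le_max' x hx, (hF t htF).1.1]
      refine ⟨R ∪ F, ?_, ?_⟩
      · intro t ht
        rcases Finset.mem_union.1 ht with htR | htF
        · obtain ⟨hpt, hlot, x, hx, htx⟩ := hR t htR
          exact ⟨hpt, hlot, x, mem_insert_of_mem hx, htx⟩
        · obtain ⟨⟨hmt, hta⟩, hpt⟩ := hF t htF
          exact ⟨hpt, by linarith, a, mem_insert_self a s, hta⟩
      · rw [sum_union hdisj]
        omega

theorem card_le_of_neg_separated (hc : Continuous p) {w : ℕ}
    (hroots : ∀ (R : Finset ℝ) (m : ℝ → ℕ),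
      (∀ t ∈ R, 1 ≤ m t ∧ ∀ k < m t, iteratedDeriv k p t = 0) → ∑ t ∈ R, m t ≤ w)
    {c lo : ℝ} (hclo : c < lo) (hpc : p c = 0) (hlo : 0 ≤ p lo)
    (hfreq : ∀ x, ∃ y, x < y ∧ 0 ≤ p y)
    (s : Finset ℝ) (hs : ∀ x ∈ s, lo < x ∧ p x < 0)
    (hsep : ∀ x ∈ s, ∀ y ∈ s, x < y → ∃ z ∈ Ioo x y, 0 ≤ p z) :
    s.card ≤ (w - 1) / 2 := by
  classical
  suffices ∃ R : Finset ℝ, (∀ t ∈ R, p t = 0) ∧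
      2 * s.card + 1 ≤ ∑ t ∈ R, rootMultBound p t by
    obtain ⟨R, hR, hRsum⟩ := this
    have := hroots R (rootMultBound p) fun t ht =>
      ⟨one_le_rootMultBound p t, fun k => iteratedDeriv_eq_zero_of_lt_rootMultBound (hR t ht)⟩
    omega
  rcases s.eq_empty_or_nonempty with rfl | hne
  · exact ⟨{c}, by simpa using hpc, by simpa using one_le_rootMultBound p c⟩
  set m := s.max' hne
  have hm : m ∈ s := s.max'_mem hne
  obtain ⟨y, hmy, hpy⟩ := hfreq m
  obtain ⟨r, ⟨hmr, -⟩, hr⟩ :=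
    intermediate_value_Ioc hmy.le hc.continuousOn ⟨(hs m hm).2, hpy⟩
  obtain ⟨R, hR, hRsum⟩ := exists_roots_of_neg_separated hc.continuousOn hlo s hs hsep
  have hrR : r ∉ R := fun hrR => by
    obtain ⟨-, -, x, hx, hrx⟩ := hR r hrR
    linarith [s.le_max' x hx]
  have hcR : c ∉ insert r R := by
    rw [Finset.mem_insert, not_or]
    exact ⟨by linarith [(hs m hm).1], fun hcR => by linarith [(hR c hcR).2.1]⟩
  refine ⟨insert c (insert r R), ?_, ?_⟩
  · simp only [Finset.mem_insert, forall_eq_or_imp]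
    exact ⟨hpc, hr, fun t ht => (hR t ht).1⟩
  · rw [sum_insert hcR, sum_insert hrR]
    have := one_le_rootMultBound p c
    have := one_le_rootMultBound p r
    omega

end RootCounting

/-- The number of connected components of `T̄` is encoded as the largest size of a finite subset
of `T̄` whose points lie in pairwise distinct components. -/
theorem offDiag_negativity_components_le_general {n N : ℕ}
    (A S : Matrix (Fin n) (Fin n) ℝ) (d : Fin n → ℝ)
    (hA : ∀ i j, 0 ≤ A i j)
    (hS : IsUnit S.det)
    (hdiag : A = S * Matrix.diagonal d * S⁻¹)
    (i j : Fin n)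
    (p : ℝ → ℝ) (a b : Fin N → ℝ)
    (hexp : ∀ t : ℝ, p t = ∑ k, a k * Real.exp (b k * t))
    (hp0 : p 0 = 0)
    (hpA : ∀ α : ℝ, 0 < α → p α = contPow S d α i j)
    (w : ℕ)
    (hroots : ∀ (s : Finset ℝ) (m : ℝ → ℕ),
      (∀ t ∈ s, 1 ≤ m t ∧ ∀ k < m t, iteratedDeriv k p t = 0) → ∑ t ∈ s, m t ≤ w) :
    ∀ s : Finset ℝ,
      (∀ x ∈ s, x ∈ {α : ℝ | 1 < α ∧ contPow S d α i j < 0}) →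
      (∀ x ∈ s, ∀ y ∈ s, x ≠ y →
        ¬ (Set.uIcc x y ⊆ {α : ℝ | 1 < α ∧ contPow S d α i j < 0})) →
      s.card ≤ (w - 1) / 2 := by
  intro s hs hsep
  have hp : Continuous p := by rw [funext hexp]; fun_prop
  have hp_nat : ∀ k : ℕ, 0 < k → 0 ≤ p k := fun k hk => by
    rw [hpA k (Nat.cast_pos.2 hk)]
    exact contPow_natCast_apply_nonneg hA hS hdiag k i j
  have hneg : ∀ x ∈ s, 1 < x ∧ p x < 0 := fun x hx =>
    ⟨(hs x hx).1, (hpA x (by linarith [(hs x hx).1])).trans_lt (hs x hx).2⟩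
  refine card_le_of_neg_separated hp hroots one_pos hp0 (by exact_mod_cast hp_nat 1 one_pos)
    (fun x => ⟨(⌈x⌉₊ + 1 : ℕ), by push_cast; linarith [Nat.le_ceil x], hp_nat _ ⌈x⌉₊.succ_pos⟩)
    s hneg fun x hx y hy hxy => ?_
  refine exists_mem_Ioo_nonneg_of_not_subset (hneg x hx).2 (hneg y hy).2 fun hsub => ?_
  refine hsep x hx y hy hxy.ne fun t ht => ?_
  rw [uIcc_of_le hxy.le] at ht
  have ht1 : 1 < t := (hneg x hx).1.trans_le ht.1
  exact ⟨ht1, hpA t (by linarith) ▸ hsub ht⟩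

/-- Let `A` be an invertible GDN matrix (entrywise nonnegative, diagonalizable with positive
eigenvalues) and `i ≠ j`.  If the entry function `α ↦ (A^α)_{ij}` is given by an exponential
polynomial `p` (agreeing with `A^α` for `α > 0`, and `p 0 = 0` since `A^0 = I`), and `p`
has at most `w` real roots counted with multiplicity, then the set
`T̄ = {α > 1 : (A^α)_{ij} < 0}` has at most `⌊(w-1)/2⌋` connected components.
The component count is encoded by: any finite subset of `T̄` whose points lie in pairwise
distinct connected components of `T̄` has cardinality at most `⌊(w-1)/2⌋`. -/
theorem offDiag_negativity_components_le {n N : ℕ}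
    (A S : Matrix (Fin n) (Fin n) ℝ) (d : Fin n → ℝ)
    (hA : ∀ i j, 0 ≤ A i j)
    (hd : ∀ i, 0 < d i)
    (hS : IsUnit S.det)
    (hdiag : A = S * Matrix.diagonal d * S⁻¹)
    (i j : Fin n) (hij : i ≠ j)
    (p : ℝ → ℝ) (a b : Fin N → ℝ)
    (hexp : ∀ t : ℝ, p t = ∑ k, a k * Real.exp (b k * t))
    (hp0 : p 0 = 0)
    (hpA : ∀ α : ℝ, 0 < α → p α = contPow S d α i j)
    (w : ℕ)
    (hroots : ∀ (s : Finset ℝ) (m : ℝ → ℕ),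
      (∀ t ∈ s, 1 ≤ m t ∧ ∀ k < m t, iteratedDeriv k p t = 0) → ∑ t ∈ s, m t ≤ w) :
    ∀ s : Finset ℝ,
      (∀ x ∈ s, x ∈ {α : ℝ | 1 < α ∧ contPow S d α i j < 0}) →
      (∀ x ∈ s, ∀ y ∈ s, x ≠ y →
        ¬ (Set.uIcc x y ⊆ {α : ℝ | 1 < α ∧ contPow S d α i j < 0})) →
      s.card ≤ (w - 1) / 2 :=
  offDiag_negativity_components_le_general A S d hA hS hdiag i j p a b hexp hp0 hpA w hroots
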